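/- Let A and B be Hermitian matrices in Matrix (Fin d) (Fin d) ℂ with A positive definite and A + B positive definite. Then log(A + B) − log A = ∫₀^∞ (t • 1 + A)⁻¹ * B * (t • 1 + A + B)⁻¹ dt, where 1 denotes the identity matrix and the integral is a Bochner integral of matrix-valued functions over (0, ∞). -/

import Mathlib

/-!
By the spectral theorem and the scalar identity `∫₀^∞ ((1+t)⁻¹ - (t+λ)⁻¹) dt = log λ` applied to
each eigenvalue, a positive definite `M` satisfies `log M = ∫₀^∞ ((1+t)⁻¹ • 1 - (t • 1 + M)⁻¹) dt`.
Subtracting these representations for `A + B` and `A` leaves the integrand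
`(t • 1 + A)⁻¹ - (t • 1 + A + B)⁻¹`, which is `(t • 1 + A)⁻¹ * B * (t • 1 + A + B)⁻¹` by the
resolvent identity.
-/

open Matrix
open scoped Classical ComplexOrder

variable {d : ℕ}

/-- Functional-calculus logarithm of a Hermitian matrix: for `A = U diag(λᵢ) U*` with `U`
unitary and `λᵢ` the (real) eigenvalues, `matLog A = U diag(ln λᵢ) U*`. (Junk value `0`
if `A` is not Hermitian.) -/
noncomputable def matLog (A : Matrix (Fin d) (Fin d) ℂ) : Matrix (Fin d) (Fin d) ℂ :=
  if h : A.IsHermitian then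
    (h.eigenvectorUnitary : Matrix (Fin d) (Fin d) ℂ) *
      Matrix.diagonal (fun i => (Real.log (h.eigenvalues i) : ℂ)) *
      star (h.eigenvectorUnitary : Matrix (Fin d) (Fin d) ℂ)
  else 0


attribute [local instance] Matrix.normedAddCommGroup Matrix.normedSpace

open MeasureTheory Set Filter Topology

section scalar

variable {c : ℝ}

lemma hasDerivAt_log_one_add_sub_log_add (hc : 0 < c) {t : ℝ} (ht : 0 ≤ t) :
    HasDerivAt (fun s => Real.log (1 + s) - Real.log (s + c)) ((1 + t)⁻¹ - (t + c)⁻¹) t := by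
  have h1 := ((hasDerivAt_id t).const_add 1).log (by positivity)
  have h2 := ((hasDerivAt_id t).add_const c).log (by positivity)
  simpa [one_div] using h1.fun_sub h2

lemma tendsto_log_one_add_sub_log_add (c : ℝ) :
    Tendsto (fun s => Real.log (1 + s) - Real.log (s + c)) atTop (𝓝 0) := by
  have h := (Real.tendsto_log_comp_add_sub_log 1).sub (Real.tendsto_log_comp_add_sub_log c)
  rw [sub_zero] at h
  refine h.congr fun s => ?_
  rw [add_comm s 1]
  ring

/-- The integrand has the sign of `c - 1`, so it is integrable as the derivative of a monotone
function with a limit at infinity. -/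
lemma integrableOn_Ioi_inv_one_add_sub_inv_add (hc : 0 < c) :
    IntegrableOn (fun t => (1 + t)⁻¹ - (t + c)⁻¹) (Ioi 0) := by
  have hderiv : ∀ t ∈ Ici (0 : ℝ), _ := fun t ht => hasDerivAt_log_one_add_sub_log_add hc ht
  rcases le_total 1 c with h | h
  · refine integrableOn_Ioi_deriv_of_nonneg' hderiv (fun t ht => ?_)
      (tendsto_log_one_add_sub_log_add c)
    exact sub_nonneg.2 (inv_anti₀ (by linarith [mem_Ioi.1 ht]) (by linarith))
  · refine integrableOn_Ioi_deriv_of_nonpos' hderiv (fun t ht => ?_)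
      (tendsto_log_one_add_sub_log_add c)
    exact sub_nonpos.2 (inv_anti₀ (by linarith [mem_Ioi.1 ht]) (by linarith))

lemma integral_Ioi_inv_one_add_sub_inv_add (hc : 0 < c) :
    ∫ t in Ioi 0, ((1 + t)⁻¹ - (t + c)⁻¹) = Real.log c := by
  rw [integral_Ioi_of_hasDerivAt_of_tendsto' (fun t ht => hasDerivAt_log_one_add_sub_log_add hc ht)
    (integrableOn_Ioi_inv_one_add_sub_inv_add hc) (tendsto_log_one_add_sub_log_add c)]
  simp

end scalar

namespace Matrix

variable {n 𝕜 : Type*} [DecidableEq n] [RCLike 𝕜] {M : Matrix n n 𝕜}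

lemma PosDef.smul_one_add (hM : M.PosDef) {t : ℝ} (ht : 0 ≤ t) : (t • 1 + M).PosDef := by
  rw [add_comm]
  exact hM.add_posSemidef (PosSemidef.one.smul ht)

variable [Fintype n]

lemma PosDef.inv_smul_one_add_eq_cfc (hM : M.PosDef) {t : ℝ} (ht : 0 ≤ t) :
    (t • 1 + M)⁻¹ = cfc (fun x => (t + x)⁻¹) M := by
  have hspec : ∀ x ∈ spectrum ℝ M, t + x ≠ 0 := by
    intro x hx
    obtain ⟨i, rfl⟩ := hM.isHermitian.spectrum_real_eq_range_eigenvalues ▸ hx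
    exact (add_pos_of_nonneg_of_pos ht (hM.eigenvalues_pos i)).ne'
  have hsa : IsSelfAdjoint M := hM.isHermitian
  rw [cfc_inv (R := ℝ) (f := fun x => t + x) (a := M) hspec, cfc_const_add t (fun x => x) M,
    cfc_id' ℝ M, nonsing_inv_eq_ringInverse, Algebra.algebraMap_eq_smul_one]

lemma PosDef.inv_one_add_smul_one_sub_inv_eq_cfc (hM : M.PosDef) {t : ℝ} (ht : 0 ≤ t) :
    (1 + t)⁻¹ • (1 : Matrix n n 𝕜) - (t • 1 + M)⁻¹
      = hM.isHermitian.cfc (fun x => (1 + t)⁻¹ - (t + x)⁻¹) := by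
  have hsa : IsSelfAdjoint M := hM.isHermitian
  have hcont : ∀ f : ℝ → ℝ, ContinuousOn f (spectrum ℝ M) := fun f => by
    rw [continuousOn_iff_continuous_domRestrict]
    fun_prop
  rw [← hM.isHermitian.cfc_eq, cfc_sub _ _ M (hcont _) (hcont _), cfc_const _ M,
    hM.inv_smul_one_add_eq_cfc ht, Algebra.algebraMap_eq_smul_one]

namespace IsHermitian

lemma cfc_eq_sum_smul (hM : M.IsHermitian) (f : ℝ → ℝ) :
    hM.cfc f = ∑ i, f (hM.eigenvalues i) •
      Unitary.conjStarAlgAut 𝕜 _ hM.eigenvectorUnitary (single i i 1) := by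
  rw [IsHermitian.cfc, ← sum_single_eq_diagonal, map_sum]
  refine Finset.sum_congr rfl fun i _ => ?_
  rw [RCLike.real_smul_eq_coe_smul (K := 𝕜), ← map_smul, smul_single, smul_eq_mul, mul_one]
  rfl

end IsHermitian

/-- The product topology on matrices is the topology of the norm, but not reducibly so:
without this instance `Integrable` cannot find `ContinuousENorm (Matrix n n 𝕜)`. -/
noncomputable abbrev normTopology : TopologicalSpace (Matrix n n 𝕜) :=
  (Matrix.normedAddCommGroup : NormedAddCommGroup (Matrix n n 𝕜)).toUniformSpace.toTopologicalSpace

attribute [local instance] normTopology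

section Integral

variable {X : Type*} [MeasurableSpace X] {μ : Measure X}

lemma IsHermitian.integrable_cfc (hM : M.IsHermitian) {f : X → ℝ → ℝ}
    (hf : ∀ i, Integrable (fun x => f x (hM.eigenvalues i)) μ) :
    Integrable (fun x => hM.cfc (f x)) μ := by
  simp_rw [hM.cfc_eq_sum_smul]
  exact integrable_finsetSum _ fun i _ => (hf i).smul_const _

lemma IsHermitian.integral_cfc (hM : M.IsHermitian) {f : X → ℝ → ℝ}
    (hf : ∀ i, Integrable (fun x => f x (hM.eigenvalues i)) μ) :
    ∫ x, hM.cfc (f x) ∂μ = hM.cfc (fun r => ∫ x, f x r ∂μ) := by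
  simp_rw [hM.cfc_eq_sum_smul]
  rw [integral_finsetSum _ fun i _ => (hf i).smul_const _]
  simp_rw [integral_smul_const]

end Integral

lemma PosDef.integrableOn_inv_one_add_smul_one_sub_inv (hM : M.PosDef) :
    IntegrableOn (fun t : ℝ => (1 + t)⁻¹ • (1 : Matrix n n 𝕜) - (t • 1 + M)⁻¹) (Ioi 0) := by
  refine IntegrableOn.congr_fun ?_
    (fun t ht => (hM.inv_one_add_smul_one_sub_inv_eq_cfc (le_of_lt ht)).symm) measurableSet_Ioi
  exact hM.isHermitian.integrable_cfc (μ := volume.restrict (Ioi 0))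
    (f := fun t x => (1 + t)⁻¹ - (t + x)⁻¹) fun i =>
    integrableOn_Ioi_inv_one_add_sub_inv_add (hM.eigenvalues_pos i)

lemma PosDef.setIntegral_inv_one_add_smul_one_sub_inv_eq_cfc_log (hM : M.PosDef) :
    ∫ t in Ioi (0 : ℝ), ((1 + t)⁻¹ • (1 : Matrix n n 𝕜) - (t • 1 + M)⁻¹)
      = hM.isHermitian.cfc Real.log := by
  rw [setIntegral_congr_fun measurableSet_Ioi
      (fun t ht => hM.inv_one_add_smul_one_sub_inv_eq_cfc (le_of_lt ht)),
    hM.isHermitian.integral_cfc (μ := volume.restrict (Ioi 0))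
      (f := fun t x => (1 + t)⁻¹ - (t + x)⁻¹) fun i =>
      integrableOn_Ioi_inv_one_add_sub_inv_add (hM.eigenvalues_pos i)]
  simp only [IsHermitian.cfc_eq_sum_smul,
    integral_Ioi_inv_one_add_sub_inv_add (hM.eigenvalues_pos _)]

end Matrix

lemma matLog_eq_cfc {M : Matrix (Fin d) (Fin d) ℂ} (hM : M.IsHermitian) :
    matLog M = hM.cfc Real.log := by
  rw [matLog, dif_pos hM, IsHermitian.cfc, Unitary.conjStarAlgAut_apply]
  rfl

lemma matLog_eq_setIntegral {M : Matrix (Fin d) (Fin d) ℂ} (hM : M.PosDef) :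
    matLog M
      = ∫ t in Ioi (0 : ℝ), ((1 + t)⁻¹ • (1 : Matrix (Fin d) (Fin d) ℂ) - (t • 1 + M)⁻¹) := by
  rw [matLog_eq_cfc hM.isHermitian, hM.setIntegral_inv_one_add_smul_one_sub_inv_eq_cfc_log]

theorem matLog_add_sub_matLog_general (d : ℕ) (A B : Matrix (Fin d) (Fin d) ℂ)
    (hA : A.PosDef) (hAB : (A + B).PosDef) :
    matLog (A + B) - matLog A
      = ∫ t in Set.Ioi (0 : ℝ),
          (t • (1 : Matrix (Fin d) (Fin d) ℂ) + A)⁻¹ * B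
            * (t • (1 : Matrix (Fin d) (Fin d) ℂ) + A + B)⁻¹ := by
  rw [matLog_eq_setIntegral hAB, matLog_eq_setIntegral hA,
    ← integral_sub hAB.integrableOn_inv_one_add_smul_one_sub_inv
      hA.integrableOn_inv_one_add_smul_one_sub_inv]
  refine setIntegral_congr_fun measurableSet_Ioi fun t ht => ?_
  have hunits : IsUnit (t • 1 + A) ↔ IsUnit (t • 1 + (A + B)) :=
    iff_of_true (hA.smul_one_add (le_of_lt ht)).isUnit (hAB.smul_one_add (le_of_lt ht)).isUnit
  rw [sub_sub_sub_cancel_left, inv_sub_inv hunits, add_sub_add_left_eq_sub, add_sub_cancel_left,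
    add_assoc]

/-- Difference formula for operator logarithms: if `A` and `A + B` are positive definite
Hermitian matrices, then `log(A+B) − log A = ∫₀^∞ (t•1+A)⁻¹ B (t•1+A+B)⁻¹ dt`
(Bochner integral over `(0,∞)`). -/
theorem matLog_add_sub_matLog (d : ℕ) (A B : Matrix (Fin d) (Fin d) ℂ)
    (hA : A.PosDef) (hB : B.IsHermitian) (hAB : (A + B).PosDef) :
    matLog (A + B) - matLog A
      = ∫ t in Set.Ioi (0 : ℝ),
          (t • (1 : Matrix (Fin d) (Fin d) ℂ) + A)⁻¹ * B
            * (t • (1 : Matrix (Fin d) (Fin d) ℂ) + A + B)⁻¹ :=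
  matLog_add_sub_matLog_general d A B hA hAB
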